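/- arXiv:math/0301211 — 3 statements merged into one kernel-verified Lean document; each statement's English description precedes it below -/
import Mathlib

section
/- A binary graph Γ = (Q, δ) satisfies the single-parent condition — if qa = q'b with a, b ∈ Σ, then either qa = q, or q'b = q', or (q,a) = (q',b) — if and only if it satisfies the following condition: whenever P and P' are paths in Γ which end at the same node, either P is a suffix of P' or P' is a suffix of P. -/
/-- The right action of bit strings (`Σ* = List Bool`) on the nodes of a binary
graph with transition function `δ`, extending `δ` by `q·ε = q`, `q·(aw) = (δ q a)·w`. -/
def act {Q : Type*} (δ : Q → Bool → Q) (q : Q) (w : List Bool) : Q :=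
  w.foldl δ q

/-- `(q₀, w)` is a path in the binary graph `(Q, δ)`: either `w = ε`, or
`w = a₁ ⋯ aₙ` and `qᵢ ≠ q_{i-1}` for `i = 1, …, n`, where `qᵢ = q₀ a₁ ⋯ aᵢ`. -/
def IsPath {Q : Type*} (δ : Q → Bool → Q) (q₀ : Q) (w : List Bool) : Prop :=
  ∀ i < w.length, act δ q₀ (w.take (i + 1)) ≠ act δ q₀ (w.take i)

/-- `q` is an ancestor of `q'`: there is a path starting at `q` and ending at `q'`.
The inheritance preorder is `q' ≤ q ↔ Ancestor δ q q'`. -/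
def Ancestor {Q : Type*} (δ : Q → Bool → Q) (q q' : Q) : Prop :=
  ∃ w : List Bool, IsPath δ q w ∧ act δ q w = q'

/-- The orbit `Σ*(q) = { qw | w ∈ Σ* }` of a node `q`. -/
def orbit {Q : Type*} (δ : Q → Bool → Q) (q : Q) : Set Q :=
  {q' | ∃ w : List Bool, act δ q w = q'}

/-- The path `(q₀, w)` is a suffix of the path `(q₀', w')`:
there is a word `v` with `w' = vw` and `q₀ = q₀'v`. -/
def PathSuffix {Q : Type*} (δ : Q → Bool → Q) (q₀ : Q) (w : List Bool)
    (q₀' : Q) (w' : List Bool) : Prop :=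
  ∃ v : List Bool, w' = v ++ w ∧ q₀ = act δ q₀' v

lemma act_append {Q : Type*} (δ : Q → Bool → Q) (q : Q) (u v : List Bool) :
    act δ q (u ++ v) = act δ (act δ q u) v := List.foldl_append ..

lemma isPath_of_concat {Q : Type*} {δ : Q → Bool → Q} {q : Q} {u : List Bool} {a : Bool}
    (h : IsPath δ q (u ++ [a])) : IsPath δ q u := by
  intro i hi
  have h2 := h i (by simp; omega)
  rwa [List.take_append_of_le_length (by omega),
    List.take_append_of_le_length (by omega)] at h2

lemma last_step {Q : Type*} {δ : Q → Bool → Q} {q : Q} {u : List Bool} {a : Bool}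
    (h : IsPath δ q (u ++ [a])) : δ (act δ q u) a ≠ act δ q u := by
  have h2 := h u.length (by simp)
  rwa [show (u ++ [a]).take (u.length + 1) = u ++ [a] by simp,
    List.take_append_of_le_length le_rfl, List.take_length, act_append] at h2

lemma forward_aux {Q : Type*} {δ : Q → Bool → Q}
    (sp : ∀ (q q' : Q) (a b : Bool), δ q a = δ q' b →
        δ q a = q ∨ δ q' b = q' ∨ (q = q' ∧ a = b)) :
    ∀ (n : ℕ) (q₀ : Q) (w : List Bool) (q₀' : Q) (w' : List Bool),
      w.length ≤ n → IsPath δ q₀ w → IsPath δ q₀' w' → act δ q₀ w = act δ q₀' w' →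
      PathSuffix δ q₀ w q₀' w' ∨ PathSuffix δ q₀' w' q₀ w := by
  intro n
  induction n with
  | zero =>
    intro q₀ w q₀' w' hl _ _ he
    rw [List.length_eq_zero_iff.mp (Nat.le_zero.mp hl)] at he ⊢
    exact Or.inl ⟨w', by simp, he⟩
  | succ n ih =>
    intro q₀ w q₀' w' hl hp hp' he
    rcases List.eq_nil_or_concat w with rfl | ⟨u, a, rfl⟩
    · exact Or.inl ⟨w', by simp, by simpa [act] using he⟩
    rcases List.eq_nil_or_concat w' with rfl | ⟨u', b, rfl⟩
    · exact Or.inr ⟨u.concat a, by simp, by simpa [act] using he.symm⟩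
    simp only [List.concat_eq_append] at hl hp hp' he ⊢
    rw [act_append, act_append] at he
    rcases sp _ _ _ _ he with h | h | ⟨hq, hab⟩
    · exact absurd h (last_step hp)
    · exact absurd h (last_step hp')
    · have := ih q₀ u q₀' u' (by simp at hl; omega)
        (isPath_of_concat hp) (isPath_of_concat hp') (by rw [hq])
      subst hab
      rcases this with ⟨v, rfl, hv⟩ | ⟨v, rfl, hv⟩
      · exact Or.inl ⟨v, by simp, hv⟩
      · exact Or.inr ⟨v, by simp, hv⟩

/-- A binary graph satisfies the single-parent condition
(if `qa = q'b` then `qa = q`, or `q'b = q'`, or `(q,a) = (q',b)`) iff whenever two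
paths end at the same node, one of them is a suffix of the other. -/
theorem singleParent_iff_path_suffix {Q : Type*} [Fintype Q] (δ : Q → Bool → Q) :
    (∀ (q q' : Q) (a b : Bool), δ q a = δ q' b →
        δ q a = q ∨ δ q' b = q' ∨ (q = q' ∧ a = b)) ↔
    (∀ (q₀ : Q) (w : List Bool) (q₀' : Q) (w' : List Bool),
        IsPath δ q₀ w → IsPath δ q₀' w' → act δ q₀ w = act δ q₀' w' →
        PathSuffix δ q₀ w q₀' w' ∨ PathSuffix δ q₀' w' q₀ w) := by
  constructor
  · intro sp q₀ w q₀' w' hp hp' he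
    exact forward_aux sp w.length q₀ w q₀' w' le_rfl hp hp' he
  · intro h q q' a b he
    by_cases h1 : δ q a = q
    · exact Or.inl h1
    by_cases h2 : δ q' b = q'
    · exact Or.inr (Or.inl h2)
    have hp : IsPath δ q [a] := by
      intro i hi
      simp only [List.length_singleton, Nat.lt_one_iff] at hi
      subst hi
      simpa [act] using h1
    have hp' : IsPath δ q' [b] := by
      intro i hi
      simp only [List.length_singleton, Nat.lt_one_iff] at hi
      subst hi
      simpa [act] using h2
    refine Or.inr (Or.inr ?_)
    rcases h q [a] q' [b] hp hp' (by simpa [act] using he) with ⟨v, hv, hq⟩ | ⟨v, hv, hq⟩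
    · have hv0 : v = [] := by
        have := congrArg List.length hv; simpa using this
      subst hv0
      simp [act] at hv hq
      exact ⟨hq, hv.symm⟩
    · have hv0 : v = [] := by
        have := congrArg List.length hv; simpa using this
      subst hv0
      simp [act] at hv hq
      exact ⟨hq.symm, hv⟩
end

section
/- Let Γ = (Q, δ) be a binary forest, and let q₁ and q₂ be distinct maximal elements of Q with respect to the inheritance order. Then their orbits Σ*(q₁) and Σ*(q₂) are disjoint. -/
/-- A binary forest: the inheritance preorder is a partial order (antisymmetric), and
every node has at most one parent (if `qa = q'b` then `qa = q`, `q'b = q'`, or `(q,a) = (q',b)`). -/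
def IsForest {Q : Type*} (δ : Q → Bool → Q) : Prop :=
  (∀ q q' : Q, Ancestor δ q q' → Ancestor δ q' q → q = q') ∧
  (∀ (q q' : Q) (a b : Bool), δ q a = δ q' b →
      δ q a = q ∨ δ q' b = q' ∨ (q = q' ∧ a = b))

/-- `q₀` is a maximal node for the inheritance preorder: whenever `q₀ ≤ q`
(i.e. `q` is an ancestor of `q₀`), we have `q = q₀`. -/
def MaximalNode {Q : Type*} (δ : Q → Bool → Q) (q₀ : Q) : Prop :=
  ∀ q : Q, Ancestor δ q q₀ → q = q₀

lemma isPath_prefix {Q : Type*} (δ : Q → Bool → Q) (q : Q) (u v : List Bool)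
    (h : IsPath δ q (u ++ v)) : IsPath δ q u := by
  intro i hi
  have h1 : (u ++ v).take (i+1) = u.take (i+1) := List.take_append_of_le_length hi
  have h2 : (u ++ v).take i = u.take i := List.take_append_of_le_length (le_of_lt hi)
  have := h i (by simp [List.length_append]; omega)
  rwa [h1, h2] at this

lemma isPath_snoc {Q : Type*} (δ : Q → Bool → Q) (q : Q) (u : List Bool) (a : Bool)
    (hu : IsPath δ q u) (hne : δ (act δ q u) a ≠ act δ q u) : IsPath δ q (u ++ [a]) := by
  intro i hi
  simp only [List.length_append, List.length_cons, List.length_nil] at hi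
  rcases lt_or_eq_of_le (Nat.lt_succ_iff.mp hi) with h | h
  · have h1 : (u ++ [a]).take (i+1) = u.take (i+1) := List.take_append_of_le_length h
    have h2 : (u ++ [a]).take i = u.take i := List.take_append_of_le_length (le_of_lt h)
    rw [h1, h2]; exact hu i h
  · subst h
    have h1 : (u ++ [a]).take (u.length + 1) = u ++ [a] := by
      rw [List.take_of_length_le]; simp
    have h2 : (u ++ [a]).take u.length = u := by
      rw [List.take_append_of_le_length le_rfl, List.take_length]
    rw [h1, h2, act_append]
    simpa [act] using hne

lemma isPath_last {Q : Type*} (δ : Q → Bool → Q) (q : Q) (u : List Bool) (a : Bool)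
    (h : IsPath δ q (u ++ [a])) : δ (act δ q u) a ≠ act δ q u := by
  have := h u.length (by simp)
  have h1 : (u ++ [a]).take (u.length + 1) = u ++ [a] := by
    rw [List.take_of_length_le]; simp
  have h2 : (u ++ [a]).take u.length = u := by
    rw [List.take_append_of_le_length le_rfl, List.take_length]
  rw [h1, h2, act_append] at this
  simpa [act] using this

lemma word_to_path {Q : Type*} (δ : Q → Bool → Q) (q : Q) (w : List Bool) :
    ∃ v : List Bool, IsPath δ q v ∧ act δ q v = act δ q w := by
  induction w using List.reverseRecOn with
  | nil => exact ⟨[], fun i hi => by simp at hi, rfl⟩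
  | append_singleton u a ih =>
    obtain ⟨v, hv, hav⟩ := ih
    by_cases h : δ (act δ q u) a = act δ q u
    · exact ⟨v, hv, by rw [hav, act_append]; simpa [act] using h.symm⟩
    · refine ⟨v ++ [a], isPath_snoc δ q v a hv (by rw [hav]; exact h), ?_⟩
      rw [act_append, act_append]; simp only [act] at hav ⊢; rw [hav]

lemma key {Q : Type*} (δ : Q → Bool → Q) (hforest : IsForest δ)
    (q₁ q₂ : Q) (h₁ : MaximalNode δ q₁) (h₂ : MaximalNode δ q₂) :
    ∀ n (w₁ w₂ : List Bool), w₁.length + w₂.length ≤ n →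
      IsPath δ q₁ w₁ → IsPath δ q₂ w₂ → act δ q₁ w₁ = act δ q₂ w₂ → q₁ = q₂ := by
  intro n
  induction n with
  | zero =>
    intro w₁ w₂ hlen _ _ heq
    have : w₁ = [] ∧ w₂ = [] := by
      constructor <;> (apply List.eq_nil_of_length_eq_zero; omega)
    obtain ⟨h1, h2⟩ := this
    subst h1; subst h2; exact heq
  | succ n ih =>
    intro w₁ w₂ hlen hp₁ hp₂ heq
    rcases List.eq_nil_or_concat w₁ with rfl | ⟨u₁, a, rfl⟩
    · exact (h₁ q₂ ⟨w₂, hp₂, heq.symm⟩).symm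
    simp only [List.concat_eq_append] at hp₁ hlen heq
    rcases List.eq_nil_or_concat w₂ with rfl | ⟨u₂, b, rfl⟩
    · exact (h₂ q₁ ⟨u₁ ++ [a], hp₁, heq⟩)
    simp only [List.concat_eq_append] at hp₂ hlen heq
    have e₁ := isPath_last δ q₁ u₁ a hp₁
    have e₂ := isPath_last δ q₂ u₂ b hp₂
    rw [act_append, act_append] at heq
    simp only [act] at heq
    have heq' : δ (act δ q₁ u₁) a = δ (act δ q₂ u₂) b := heq
    rcases hforest.2 _ _ _ _ heq' with h | h | ⟨hq, hab⟩
    · exact absurd h e₁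
    · exact absurd h e₂
    · refine ih u₁ u₂ (by simp at hlen ⊢; omega)
        (isPath_prefix δ q₁ u₁ [a] hp₁) (isPath_prefix δ q₂ u₂ [b] hp₂) hq


/-- In a binary forest, the orbits of two distinct maximal
elements are disjoint. -/
theorem forest_maximal_orbits_disjoint {Q : Type*} [Fintype Q] (δ : Q → Bool → Q)
    (hforest : IsForest δ) (q₁ q₂ : Q) (h₁ : MaximalNode δ q₁) (h₂ : MaximalNode δ q₂)
    (hne : q₁ ≠ q₂) :
    orbit δ q₁ ∩ orbit δ q₂ = ∅ := by
  ext x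
  simp only [Set.mem_inter_iff, Set.mem_empty_iff_false, iff_false]
  rintro ⟨⟨w₁, hw₁⟩, ⟨w₂, hw₂⟩⟩
  obtain ⟨v₁, hv₁, hav₁⟩ := word_to_path δ q₁ w₁
  obtain ⟨v₂, hv₂, hav₂⟩ := word_to_path δ q₂ w₂
  exact hne (key δ hforest q₁ q₂ h₁ h₂ (v₁.length + v₂.length) v₁ v₂ le_rfl hv₁ hv₂
    (by rw [hav₁, hav₂, hw₁, hw₂]))
end

section
/- Let Γ = (Q, δ) be a binary forest, and let q₀ ∈ Q be a node with trivial isotropy, i.e., Σ*_{q₀} = {ε}. Then the left and right subtrees at q₀ are disjoint: Q_λ(q₀) ∩ Q_ρ(q₀) = ∅, where Q_λ(q₀) = { q₀0v | v ∈ Σ* } and Q_ρ(q₀) = { q₀1v | v ∈ Σ* }. -/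
/-- In a binary forest, if a node `q₀` has trivial isotropy
(`Σ*_{q₀} = {ε}`), then the left subtree `Q_λ(q₀) = {q₀0v | v ∈ Σ*}` and the right
subtree `Q_ρ(q₀) = {q₀1v | v ∈ Σ*}` at `q₀` are disjoint.  (Here the bit `0`
is encoded as `false` and the bit `1` as `true`.) -/
theorem forest_subtrees_disjoint {Q : Type*} [Fintype Q] (δ : Q → Bool → Q)
    (hforest : IsForest δ) (q₀ : Q)
    (htriv : {w : List Bool | act δ q₀ w = q₀} = {([] : List Bool)}) :
    {q : Q | ∃ v : List Bool, act δ q₀ (false :: v) = q} ∩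
      {q : Q | ∃ v : List Bool, act δ q₀ (true :: v) = q} = ∅ := by
  have htriv' : ∀ w : List Bool, act δ q₀ w = q₀ → w = [] := by
    intro w hw
    have := Set.ext_iff.mp htriv w
    simpa using this.mp hw
  have hcat : ∀ (q : Q) (l : List Bool) (a : Bool),
      act δ q (l ++ [a]) = δ (act δ q l) a := by
    intro q l a; simp [act, List.foldl_append]
  have key : ∀ n (v v' : List Bool), v.length + v'.length ≤ n →
      act δ (δ q₀ false) v ≠ act δ (δ q₀ true) v' := by
    intro n
    induction n with
    | zero =>
      intro v v' h heq
      have hv : v = [] := by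
        cases v with
        | nil => rfl
        | cons a t => simp at h
      have hv' : v' = [] := by
        cases v' with
        | nil => rfl
        | cons a t => simp at h
      subst hv; subst hv'
      simp only [act, List.foldl_nil] at heq
      rcases hforest.2 q₀ q₀ false true heq with h1 | h1 | h1
      · have := htriv' [false] (by simpa [act] using h1); simp at this
      · have := htriv' [true] (by simpa [act] using h1); simp at this
      · simp at h1
    | succ n ih =>
      intro v v' h heq
      rcases List.eq_nil_or_concat v with hv | ⟨l, a, rfl⟩
      · rcases List.eq_nil_or_concat v' with hv' | ⟨l', b, rfl⟩
        · subst hv; subst hv'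
          simp only [act, List.foldl_nil] at heq
          rcases hforest.2 q₀ q₀ false true heq with h1 | h1 | h1
          · have := htriv' [false] (by simpa [act] using h1); simp at this
          · have := htriv' [true] (by simpa [act] using h1); simp at this
          · simp at h1
        · subst hv
          simp only [List.concat_eq_append] at h heq
          rw [hcat] at heq
          simp only [act, List.foldl_nil] at heq
          rcases hforest.2 q₀ (act δ (δ q₀ true) l') false b heq with h1 | h1 | h1
          · have := htriv' [false] (by simpa [act] using h1); simp at this
          · refine ih [] l' ?_ ?_
            · have := h; simp at this ⊢; omega
            · simpa [act] using heq.trans h1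
          · have : act δ q₀ (true :: l') = q₀ := by
              simpa [act] using h1.1.symm
            have := htriv' _ this; simp at this
      · rcases List.eq_nil_or_concat v' with hv' | ⟨l', b, rfl⟩
        · subst hv'
          simp only [List.concat_eq_append] at h heq
          rw [hcat] at heq
          simp only [act, List.foldl_nil] at heq
          rcases hforest.2 (act δ (δ q₀ false) l) q₀ a true heq with h1 | h1 | h1
          · refine ih l [] ?_ ?_
            · have := h; simp at this ⊢; omega
            · simpa [act] using (heq.symm.trans h1).symm
          · have := htriv' [true] (by simpa [act] using h1); simp at this
          · have : act δ q₀ (false :: l) = q₀ := by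
              simpa [act] using h1.1
            have := htriv' _ this; simp at this
        · simp only [List.concat_eq_append] at h heq
          rw [hcat, hcat] at heq
          rcases hforest.2 (act δ (δ q₀ false) l) (act δ (δ q₀ true) l') a b heq
            with h1 | h1 | h1
          · refine ih l (l' ++ [b]) ?_ ((heq.symm.trans h1).symm.trans (hcat _ _ _).symm)
            have := h; simp at this ⊢; omega
          · refine ih (l ++ [a]) l' ?_ ((hcat _ _ _).trans (heq.trans h1))
            have := h; simp at this ⊢; omega
          · refine ih l l' ?_ h1.1
            have := h; simp at this ⊢; omega
  ext q
  simp only [Set.mem_inter_iff, Set.mem_setOf_eq, Set.mem_empty_iff_false, iff_false]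
  rintro ⟨⟨v, hv⟩, ⟨v', hv'⟩⟩
  exact key (v.length + v'.length) v v' le_rfl
    (by simpa [act] using hv.trans hv'.symm)
end
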